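/- arXiv:1702.02406 — 6 statements merged into one kernel-verified Lean document; each statement's English description precedes it below -/
import Mathlib

section
/- Let Σ be a type and let L be a language over Σ that is not regular. Then there is no least regular language containing L; that is, there is no regular language R with L ⊆ R such that R ⊆ R' for every regular language R' with L ⊆ R'. (Consequently, the poset of regular languages over Σ, ordered by inclusion, does not form a Galois connection with the complete lattice of all languages over Σ when the concretization is set inclusion.) -/
/-! If `L ⊆ R` with `R` regular and `L` not, some word `w ∈ R` lies outside `L`. Finite languages
are regular by Myhill–Nerode (their only left quotients are those by prefixes of their words, and
`∅`), so `R \ {w}` is a strictly smaller regular language still containing `L`. -/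

namespace Language

variable {α : Type*}

theorem leftQuotient_eq_zero_of_not_prefix {L : Language α} {x : List α}
    (hx : ∀ w ∈ L, ¬x <+: w) : L.leftQuotient x = 0 := by
  ext y
  exact iff_of_false (fun hy => hx _ hy (List.prefix_append x y)) id

theorem isRegular_of_finite {L : Language α} (hL : Set.Finite L) : L.IsRegular := by
  refine .of_finite_range_leftQuotient ?_
  have hprefixes : {x : List α | ∃ w ∈ L, x <+: w}.Finite :=
    (hL.biUnion fun w _ => w.inits.finite_toSet).subset fun x ⟨w, hw, hxw⟩ =>
      Set.mem_biUnion hw ((List.mem_inits x w).mpr hxw)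
  refine ((hprefixes.image L.leftQuotient).insert 0).subset ?_
  rintro _ ⟨x, rfl⟩
  by_cases hx : ∃ w ∈ L, x <+: w
  · exact Or.inr ⟨x, hx, rfl⟩
  · exact Or.inl (leftQuotient_eq_zero_of_not_prefix fun w hw hxw => hx ⟨w, hw, hxw⟩)

end Language

/-- If `L` is a non-regular language over an alphabet `A`, then there is
no least regular language containing `L`: no regular `R ⊇ L` is below every regular
language containing `L`. -/
theorem no_least_regular_superlanguage {A : Type} (L : Language A)
    (hL : ¬ L.IsRegular) :
    ¬ ∃ R : Language A, R.IsRegular ∧ L ≤ R ∧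
        ∀ R' : Language A, R'.IsRegular → L ≤ R' → R ≤ R' := by
  rintro ⟨R, hR, hLR, hleast⟩
  obtain ⟨w, hwR, hwL⟩ : ∃ w ∈ R, w ∉ L := by
    by_contra! hRL
    exact hL (le_antisymm hLR hRL ▸ hR)
  have hR' : (R ⊓ ({w} : Set (List A))ᶜ : Language A).IsRegular :=
    hR.inf (Language.isRegular_of_finite (Set.finite_singleton w)).compl
  have hLR' : L ≤ R ⊓ ({w} : Set (List A))ᶜ := fun x hx => ⟨hLR hx, fun hxw => hwL (hxw ▸ hx)⟩
  exact (hleast _ hR' hLR' hwR).2 rfl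
end

section
/- There do not exist a map α from the complete lattice of all languages over the two-letter alphabet Fin 2 (ordered by inclusion) to the poset of regular languages over Fin 2 (ordered by inclusion) such that α together with the inclusion map γ (sending a regular language to itself, viewed as a language) forms a Galois connection, i.e., such that α(L) ⊆ R ↔ L ⊆ γ(R) for all languages L and regular languages R. -/
/-!
If `α ⊣ γ` with `γ` the inclusion, then `γ (α L)` is the least regular language containing `L`.
Every co-singleton `{w}ᶜ` is regular, and `L` is the intersection of the co-singletons
containing it, so `γ (α L) = L` and every language would be regular. But `{0ⁿ1ⁿ}` is not: its
left quotients by the words `0ᵐ` are pairwise distinct, so by Myhill–Nerode it has no DFA.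
-/

theorem GaloisConnection.mem_of_forall_compl_singleton_mem {β : Type*} {p : Set β → Prop}
    (hp : ∀ x, p {x}ᶜ) {l : Set β → Subtype p} (gc : GaloisConnection l Subtype.val)
    (L : Set β) : p L := by
  have hclosure : (l L).val = L := by
    refine le_antisymm (fun x hx => ?_) (gc.le_u_l L)
    by_contra hxL
    have : l L ≤ ⟨{x}ᶜ, hp x⟩ := gc.l_le fun y hy (hyx : y = x) => hxL (hyx ▸ hy)
    exact this hx rfl
  exact hclosure ▸ (l L).2

namespace Language

variable {α : Type*}

theorem IsRegular.of_finite {L : Language α} (h : (L : Set (List α)).Finite) : L.IsRegular := by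
  refine .of_finite_range_leftQuotient (Set.Finite.subset (s := 𝒫 ⋃ w ∈ L, {v | v <:+ w}) ?_ ?_)
  · exact (h.biUnion fun w _ =>
      (List.finite_toSet w.tails).subset fun v => (List.mem_tails v w).mpr).powerset
  · rintro _ ⟨x, rfl⟩ y hy
    exact Set.mem_biUnion hy (List.suffix_append x y)

def anbn (a b : α) : Language α := {x | ∃ n, List.replicate n a ++ List.replicate n b = x}

theorem replicate_append_replicate_mem_anbn {a b : α} (hab : a ≠ b) {m n : ℕ} :
    List.replicate m a ++ List.replicate n b ∈ anbn a b ↔ m = n := by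
  classical
  constructor
  · rintro ⟨k, hk⟩
    have hcount_a := congrArg (List.count a) hk
    have hcount_b := congrArg (List.count b) hk
    simp [List.count_replicate, hab, hab.symm] at hcount_a hcount_b
    omega
  · rintro rfl
    exact ⟨m, rfl⟩

theorem leftQuotient_replicate_anbn_injective {a b : α} (hab : a ≠ b) :
    (fun m => (anbn a b).leftQuotient (List.replicate m a)).Injective := by
  intro m n (hmn : (anbn a b).leftQuotient _ = (anbn a b).leftQuotient _)
  have : List.replicate n b ∈ (anbn a b).leftQuotient (List.replicate m a) := by
    rw [hmn]
    exact (replicate_append_replicate_mem_anbn hab).mpr rfl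
  exact (replicate_append_replicate_mem_anbn hab).mp this

theorem not_isRegular_anbn {a b : α} (hab : a ≠ b) : ¬ (anbn a b).IsRegular := fun h =>
  Set.infinite_range_of_injective (leftQuotient_replicate_anbn_injective hab)
    (h.finite_range_leftQuotient.subset (Set.range_subset_iff.mpr fun _ => ⟨_, rfl⟩))

end Language

/-- There is no abstraction map `a` from the complete lattice of all
languages over `Fin 2` to the poset of regular languages over `Fin 2` forming a
Galois connection with the inclusion map `γ = Subtype.val`. -/
theorem no_galois_connection_to_regular_languages :
    ¬ ∃ a : Language (Fin 2) → {R : Language (Fin 2) // R.IsRegular},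
        GaloisConnection a (Subtype.val : {R : Language (Fin 2) // R.IsRegular} → Language (Fin 2)) := by
  rintro ⟨a, gc⟩
  have hcosingleton (w : List (Fin 2)) : Language.IsRegular ({w} : Language (Fin 2))ᶜ :=
    (Language.IsRegular.of_finite (Set.finite_singleton w)).compl
  exact Language.not_isRegular_anbn (by decide : (0 : Fin 2) ≠ 1)
    (gc.mem_of_forall_compl_singleton_mem hcosingleton _)
end

section
/- Let Σ and Γ be alphabets and let M be an NFA over the product alphabet Σ × Γ (a letter-to-letter transducer, where a word w over Σ × Γ encodes input w.map fst and output w.map snd). For every regular language L over Σ, the output language { v : List Γ : ∃ w accepted by M with w.map fst ∈ L and w.map snd = v } is a regular language over Γ. -/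
/-!
The output language is the image of `M.accepts ∩ (List.map Prod.fst)⁻¹' L` under
`List.map Prod.snd`. Regular languages are closed under intersection, under preimages of
letter-to-letter morphisms (pull the DFA back along the letter map), and under images of
letter-to-letter morphisms: relabel each transition `a` of an NFA by `f a` and determinize.
-/

namespace NFA

variable {α β σ : Type*}

def map (f : α → β) (M : NFA α σ) : NFA β σ where
  step s b := ⋃ (a) (_ : f a = b), M.step s a
  start := M.start
  accept := M.accept

theorem stepSet_map (f : α → β) (M : NFA α σ) (S : Set σ) (b : β) :
    (M.map f).stepSet S b = ⋃ (a) (_ : f a = b), M.stepSet S a := by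
  ext; simp only [stepSet, map, Set.mem_iUnion]; tauto

theorem evalFrom_map (f : α → β) (M : NFA α σ) (S : Set σ) (v : List β) :
    (M.map f).evalFrom S v = ⋃ (w) (_ : w.map f = v), M.evalFrom S w := by
  induction v generalizing S with
  | nil => simp
  | cons b v ih =>
    ext t
    simp only [evalFrom_cons, ih, stepSet_map, evalFrom_iUnion, Set.mem_iUnion, exists_prop,
      List.map_eq_cons_iff]
    exact ⟨fun ⟨w, hw, a, ha, h⟩ => ⟨a :: w, ⟨a, w, rfl, ha, hw⟩, h⟩,
      fun ⟨_, ⟨a, w, rfl, ha, hw⟩, h⟩ => ⟨w, hw, a, ha, h⟩⟩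

theorem accepts_map (f : α → β) (M : NFA α σ) : (M.map f).accepts = Language.map f M.accepts := by
  ext v
  change _ ↔ v ∈ List.map f '' M.accepts
  simp only [mem_accepts, evalFrom_map, Set.mem_iUnion, exists_prop]
  exact ⟨fun ⟨s, hs, w, hw, h⟩ => ⟨w, ⟨s, hs, h⟩, hw⟩, fun ⟨w, ⟨s, hs, h⟩, hw⟩ => ⟨s, hs, w, hw, h⟩⟩

theorem isRegular_accepts [Finite σ] (M : NFA α σ) : M.accepts.IsRegular := by
  have := Fintype.ofFinite (Set σ)
  exact Language.isRegular_iff.2 ⟨_, inferInstance, M.toDFA, M.toDFA_correct⟩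

end NFA

namespace Language

variable {α β : Type*}

theorem IsRegular.map {L : Language α} (h : L.IsRegular) (f : α → β) : (map f L).IsRegular := by
  obtain ⟨σ, _, M, rfl⟩ := h
  rw [← M.toNFA_correct, ← NFA.accepts_map]
  exact NFA.isRegular_accepts _

theorem IsRegular.preimage_map {L : Language β} (h : L.IsRegular) (f : α → β) :
    IsRegular (T := α) (List.map f ⁻¹' L) := by
  obtain ⟨σ, _, M, rfl⟩ := h
  exact ⟨σ, inferInstance, M.comap f, M.accepts_comap f⟩

end Language

/-- Let `M` be a finite-state letter-to-letter transducer from `A` to `B`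
(an NFA over the product alphabet `A × B`). For every regular language `L` over `A`,
the output language of `M` on inputs from `L` is a regular language over `B`. -/
theorem transducer_output_regular {A B σ : Type*} [Fintype σ]
    (M : NFA (A × B) σ) (L : Language A) (hL : L.IsRegular) :
    Language.IsRegular
      {v : List B | ∃ w ∈ M.accepts, w.map Prod.fst ∈ L ∧ w.map Prod.snd = v} := by
  have hOutput : {v : List B | ∃ w ∈ M.accepts, w.map Prod.fst ∈ L ∧ w.map Prod.snd = v} =
      Language.map Prod.snd (M.accepts ⊓ List.map Prod.fst ⁻¹' L) := by
    ext v
    change _ ↔ v ∈ List.map Prod.snd '' (M.accepts ∩ List.map Prod.fst ⁻¹' L)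
    exact ⟨fun ⟨w, hM, hin, hw⟩ => ⟨w, ⟨hM, hin⟩, hw⟩, fun ⟨w, ⟨hM, hin⟩, hw⟩ => ⟨w, hM, hin, hw⟩⟩
  rw [hOutput]
  exact (M.isRegular_accepts.inf (hL.preimage_map Prod.fst)).map Prod.snd
end

section
/- Let Σ, Γ, Δ be alphabets, let M₁ be an NFA over Σ × Γ with state type σ₁ and M₂ an NFA over Γ × Δ with state type σ₂ (letter-to-letter transducers). Then there exists an NFA M over Σ × Δ with state type σ₁ × σ₂ such that for every word w over Σ × Δ: w is accepted by M if and only if there exists a word u over Γ with length u = length w such that the word zip (w.map fst) u is accepted by M₁ and the word zip u (w.map snd) is accepted by M₂. (Composition of letter-to-letter transductions is realized by a letter-to-letter transducer.) -/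
/-! The product automaton guesses the intermediate letter `b` afresh at each step and feeds
`(a, b)` to `M₁` and `(b, c)` to `M₂`. Because the transducers are letter-to-letter, the
sequence of guesses along a run is exactly an intermediate word `u` of the same length as `w`,
and for a fixed `u` the product reaches precisely the pairs of states reached by `M₁` on
`zip (w.map fst) u` and by `M₂` on `zip u (w.map snd)`. -/

open Set

namespace NFA

variable {A B C σ₁ σ₂ : Type*}

def transducerComp (M₁ : NFA (A × B) σ₁) (M₂ : NFA (B × C) σ₂) : NFA (A × C) (σ₁ × σ₂) where
  step p x q := ∃ b, q.1 ∈ M₁.step p.1 (x.1, b) ∧ q.2 ∈ M₂.step p.2 (b, x.2)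
  start := M₁.start ×ˢ M₂.start
  accept := M₁.accept ×ˢ M₂.accept

variable (M₁ : NFA (A × B) σ₁) (M₂ : NFA (B × C) σ₂)

theorem stepSet_transducerComp_prod (S₁ : Set σ₁) (S₂ : Set σ₂) (x : A × C) :
    (transducerComp M₁ M₂).stepSet (S₁ ×ˢ S₂) x
      = ⋃ b, M₁.stepSet S₁ (x.1, b) ×ˢ M₂.stepSet S₂ (b, x.2) := by
  ext q
  simp only [mem_stepSet, mem_iUnion, mem_prod, transducerComp]
  constructor
  · rintro ⟨t, ⟨ht₁, ht₂⟩, b, hq₁, hq₂⟩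
    exact ⟨b, ⟨t.1, ht₁, hq₁⟩, ⟨t.2, ht₂, hq₂⟩⟩
  · rintro ⟨b, ⟨t₁, ht₁, hq₁⟩, ⟨t₂, ht₂, hq₂⟩⟩
    exact ⟨(t₁, t₂), ⟨ht₁, ht₂⟩, b, hq₁, hq₂⟩

theorem mem_acceptsFrom_transducerComp_prod (S₁ : Set σ₁) (S₂ : Set σ₂) (w : List (A × C)) :
    w ∈ (transducerComp M₁ M₂).acceptsFrom (S₁ ×ˢ S₂) ↔
      ∃ u : List B, u.length = w.length ∧
        List.zip (w.map Prod.fst) u ∈ M₁.acceptsFrom S₁ ∧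
        List.zip u (w.map Prod.snd) ∈ M₂.acceptsFrom S₂ := by
  induction w generalizing S₁ S₂ with
  | nil => simp [transducerComp, and_and_and_comm]
  | cons x w ih =>
    rw [cons_mem_acceptsFrom, stepSet_transducerComp_prod, acceptsFrom_iUnion]
    -- `zip` and `acceptsFrom` unfold definitionally on a cons, so `h₁`, `h₂` pass through as is.
    refine mem_iUnion.trans ⟨?_, ?_⟩
    · rintro ⟨b, hb⟩
      obtain ⟨u, hu, h₁, h₂⟩ := (ih _ _).1 hb
      exact ⟨b :: u, by simp [hu], h₁, h₂⟩
    · rintro ⟨_ | ⟨b, u⟩, hu, h₁, h₂⟩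
      · simp at hu
      · exact ⟨b, (ih _ _).2 ⟨u, by simpa using hu, h₁, h₂⟩⟩

theorem mem_accepts_transducerComp (w : List (A × C)) :
    w ∈ (transducerComp M₁ M₂).accepts ↔
      ∃ u : List B, u.length = w.length ∧
        List.zip (w.map Prod.fst) u ∈ M₁.accepts ∧
        List.zip u (w.map Prod.snd) ∈ M₂.accepts :=
  mem_acceptsFrom_transducerComp_prod M₁ M₂ M₁.start M₂.start w

end NFA

/-- The composition of two letter-to-letter transducers
`M₁ : A ⇒ B` and `M₂ : B ⇒ C` is realized by a letter-to-letter transducer over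
`A × C` with state type `σ₁ × σ₂`: it accepts `w` iff there is an intermediate word
`u` over `B` of the same length such that `M₁` accepts `zip (input of w) u` and
`M₂` accepts `zip u (output of w)`. -/
theorem transducer_composition {A B C σ₁ σ₂ : Type*}
    (M₁ : NFA (A × B) σ₁) (M₂ : NFA (B × C) σ₂) :
    ∃ M : NFA (A × C) (σ₁ × σ₂),
      ∀ w : List (A × C),
        w ∈ M.accepts ↔
          ∃ u : List B, u.length = w.length ∧
            List.zip (w.map Prod.fst) u ∈ M₁.accepts ∧
            List.zip u (w.map Prod.snd) ∈ M₂.accepts :=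
  ⟨NFA.transducerComp M₁ M₂, NFA.mem_accepts_transducerComp M₁ M₂⟩
end

section
/- Let Σ be an alphabet, let L be a regular language over Σ, and fix natural numbers n and m. Then the substring image language { (w.drop n).take m : w ∈ L, n + m ≤ length w } — the set of words consisting of the m consecutive symbols of some w ∈ L starting from position n, defined only when n + m ≤ length w — is a regular language over Σ. -/
/-!
The substring image is `((Σⁿ \ L) / Σ*) ∩ Σᵐ`: a word `u` of length `m` occurs at position `n`
of a word of `L` iff `x ++ u ++ v ∈ L` for some `x` of length `n` and some `v`. A right quotient
`L / R` of a regular language by an arbitrary language is recognised by the DFA of `L` with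
accepting states those from which some word of `R` leads to acceptance; left quotients reduce to
right quotients by reversal.
-/

namespace Language

variable {α : Type*}

/-- The right quotient `L / R`. -/
def rightQuot (L R : Language α) : Language α := {u | ∃ v ∈ R, u ++ v ∈ L}

/-- The left quotient `R \ L`. -/
def leftQuot (R L : Language α) : Language α := {v | ∃ u ∈ R, u ++ v ∈ L}

theorem reverse_leftQuot (R L : Language α) :
    (R.leftQuot L).reverse = L.reverse.rightQuot R.reverse := by
  ext v
  simp only [mem_reverse, leftQuot, rightQuot]
  constructor
  · rintro ⟨u, hu, huv⟩
    exact ⟨u.reverse, by rwa [List.reverse_reverse], by simpa using huv⟩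
  · rintro ⟨u, hu, huv⟩
    exact ⟨u.reverse, hu, by simpa using huv⟩

theorem IsRegular.rightQuot {L : Language α} (hL : L.IsRegular) (R : Language α) :
    (L.rightQuot R).IsRegular := by
  obtain ⟨σ, _, M, rfl⟩ := hL
  refine ⟨σ, inferInstance, ⟨M.step, M.start, {s | ∃ v ∈ R, M.evalFrom s v ∈ M.accept}⟩, ?_⟩
  ext u
  change (∃ v ∈ R, M.evalFrom (M.eval u) v ∈ M.accept) ↔ ∃ v ∈ R, u ++ v ∈ M.accepts
  simp only [DFA.mem_accepts, DFA.eval, DFA.evalFrom_of_append]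

theorem IsRegular.leftQuot {L : Language α} (hL : L.IsRegular) (R : Language α) :
    (R.leftQuot L).IsRegular :=
  .of_reverse <| reverse_leftQuot R L ▸ hL.reverse.rightQuot _

theorem isRegular_setOf_length_eq (k : ℕ) : IsRegular {w : List α | w.length = k} := by
  let M : DFA α (Fin (k + 2)) :=
    ⟨fun i _ => ⟨min (i + 1) (k + 1), by omega⟩, 0, {i | (i : ℕ) = k}⟩
  have evalFrom_val (w : List α) (i : Fin (k + 2)) :
      (M.evalFrom i w : ℕ) = min (i + w.length) (k + 1) := by
    induction w generalizing i with
    | nil => simp only [DFA.evalFrom_nil, List.length_nil]; omega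
    | cons a w ih => simp only [DFA.evalFrom_cons, ih, List.length_cons]; simp [M]; omega
  refine ⟨Fin (k + 2), inferInstance, M, ?_⟩
  ext w
  change (M.evalFrom 0 w : ℕ) = k ↔ w.length = k
  rw [evalFrom_val, Fin.val_zero, zero_add]
  omega

end Language

open Language

theorem substring_image_eq_rightQuot_leftQuot_inf {A : Type*} (L : Language A) (n m : ℕ) :
    {u : List A | ∃ w ∈ L, n + m ≤ w.length ∧ (w.drop n).take m = u} =
      (leftQuot {x | x.length = n} L).rightQuot ⊤ ⊓ {u | u.length = m} := by
  ext u
  constructor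
  · rintro ⟨w, hw, hlen, rfl⟩
    refine ⟨⟨(w.drop n).drop m, trivial, w.take n, List.length_take_of_le (by omega), ?_⟩,
      List.length_take_of_le (by simp; omega)⟩
    simpa using hw
  · rintro ⟨⟨v, -, x, rfl, hxuv⟩, rfl⟩
    exact ⟨x ++ (u ++ v), hxuv, by simp, by simp⟩

/-- For a regular language `L` over `A` and fixed `n m : ℕ`, the
language of substrings `substr(w, n, m) = (w.drop n).take m` of words `w ∈ L` with
`n + m ≤ length w` is regular. -/
theorem regular_substring_image {A : Type*} (L : Language A) (hL : L.IsRegular)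
    (n m : ℕ) :
    Language.IsRegular
      {u : List A | ∃ w ∈ L, n + m ≤ w.length ∧ (w.drop n).take m = u} := by
  rw [substring_image_eq_rightQuot_leftQuot_inf]
  exact ((hL.leftQuot _).rightQuot _).inf (isRegular_setOf_length_eq m)
end

section
/- Let α be a finite alphabet and let M be a deterministic finite automaton over α with a finite state type. Then there exists a regular expression r over α whose denoted language equals the language accepted by M. (Every finite automaton can be converted to an equivalent regular expression, e.g., by Brzozowski's algebraic method.) -/
/-!
Kleene's construction. `M.pathLang S p q` is the language of words leading `M` from `p` to `q`
with every intermediate state in `S`. For `S = ∅` it is finite: `ε` (when `p = q`) and letters.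
Splitting a run at its visits to `s` gives
`pathLang (S ∪ {s}) p q = pathLang S p q + pathLang S p s * (pathLang S s s)∗ * pathLang S s q`,
so by induction on `S` every `pathLang S p q` is denoted by a regular expression, and the accepted
language is the finite sum of `pathLang univ start q` over accepting `q`.
-/

open scoped Computability

theorem add_mul_kstar_mul {α : Type*} [KleeneAlgebra α] (a b : α) :
    b + a * (a∗ * b) = a∗ * b := by
  conv_rhs => rw [← one_add_mul_kstar]
  rw [add_mul, one_mul, mul_assoc]

namespace Language

variable {α : Type*}

def HasRegex (L : Language α) : Prop :=
  ∃ r : RegularExpression α, r.matches' = L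

namespace HasRegex

theorem zero : (0 : Language α).HasRegex := ⟨0, RegularExpression.matches'_zero⟩

theorem one : (1 : Language α).HasRegex := ⟨1, RegularExpression.matches'_epsilon⟩

theorem singleton (a : α) : ({[a]} : Language α).HasRegex :=
  ⟨.char a, RegularExpression.matches'_char a⟩

theorem add {L₁ L₂ : Language α} : L₁.HasRegex → L₂.HasRegex → (L₁ + L₂).HasRegex
  | ⟨r₁, h₁⟩, ⟨r₂, h₂⟩ => ⟨r₁ + r₂, by rw [RegularExpression.matches'_add, h₁, h₂]⟩

theorem mul {L₁ L₂ : Language α} : L₁.HasRegex → L₂.HasRegex → (L₁ * L₂).HasRegex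
  | ⟨r₁, h₁⟩, ⟨r₂, h₂⟩ => ⟨r₁ * r₂, by rw [RegularExpression.matches'_mul, h₁, h₂]⟩

theorem kstar {L : Language α} : L.HasRegex → L∗.HasRegex
  | ⟨r, h⟩ => ⟨r.star, by rw [RegularExpression.matches'_star, h]⟩

theorem sum {ι : Type*} (s : Finset ι) {L : ι → Language α} (h : ∀ i ∈ s, (L i).HasRegex) :
    (∑ i ∈ s, L i).HasRegex :=
  Finset.sum_induction L HasRegex (fun _ _ => add) zero h

end HasRegex

theorem mem_sum {ι : Type*} (s : Finset ι) (L : ι → Language α) (x : List α) :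
    x ∈ ∑ i ∈ s, L i ↔ ∃ i ∈ s, x ∈ L i := by
  classical
  induction s using Finset.induction_on with
  | empty => simp [notMem_zero]
  | insert i s hi ih => rw [Finset.sum_insert hi, mem_add, ih, Finset.exists_mem_insert]

end Language

namespace DFA

variable {α σ : Type*} (M : DFA α σ)

inductive PathVia (S : Set σ) : σ → List α → σ → Prop
  | nil (p : σ) : PathVia S p [] p
  | single (p : σ) (a : α) : PathVia S p [a] (M.step p a)
  | cons {p q : σ} (a : α) {w : List α} :
      M.step p a ∈ S → PathVia S (M.step p a) w q → PathVia S p (a :: w) q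

def pathLang (S : Set σ) (p q : σ) : Language α :=
  {w | M.PathVia S p w q}

variable {M}

theorem PathVia.mono {S T : Set σ} (hST : S ⊆ T) {p q : σ} {w : List α}
    (h : M.PathVia S p w q) : M.PathVia T p w q := by
  induction h with
  | nil p => exact .nil p
  | single p a => exact .single p a
  | cons a hS _ ih => exact .cons a (hST hS) ih

theorem PathVia.append {S : Set σ} {p m q : σ} {u v : List α} (hu : M.PathVia S p u m)
    (hm : m ∈ S) (hv : M.PathVia S m v q) : M.PathVia S p (u ++ v) q := by
  induction hu with
  | nil p => exact hv
  | single p a => exact .cons a hm hv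
  | cons a hS _ ih => exact .cons a hS (ih hm hv)

theorem pathVia_univ_iff {p q : σ} {w : List α} :
    M.PathVia Set.univ p w q ↔ M.evalFrom p w = q := by
  constructor
  · intro h
    induction h with
    | nil p => rfl
    | single p a => rfl
    | cons a _ _ ih => exact ih
  · rintro rfl
    induction w generalizing p with
    | nil => exact .nil p
    | cons a w ih => exact .cons a trivial ih

variable (M)

theorem pathLang_mono {S T : Set σ} (hST : S ⊆ T) (p q : σ) :
    M.pathLang S p q ≤ M.pathLang T p q :=
  fun _ => PathVia.mono hST

theorem pathLang_mul_le {S : Set σ} {p m q : σ} (hm : m ∈ S) :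
    M.pathLang S p m * M.pathLang S m q ≤ M.pathLang S p q := by
  rintro _ ⟨u, hu, v, hv, rfl⟩
  exact hu.append hm hv

theorem kstar_pathLang_le (S : Set σ) (s : σ) :
    (M.pathLang S s s)∗ ≤ M.pathLang (insert s S) s s :=
  kstar_le_of_mul_le_right (fun _ h => h ▸ .nil s) <| calc
    M.pathLang S s s * M.pathLang (insert s S) s s
      ≤ M.pathLang (insert s S) s s * M.pathLang (insert s S) s s := by
        grw [pathLang_mono M (Set.subset_insert s S)]
    _ ≤ M.pathLang (insert s S) s s := pathLang_mul_le M (Set.mem_insert s S)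

theorem pathLang_empty [Fintype α] [DecidableEq σ] (p q : σ) :
    M.pathLang ∅ p q =
      (if p = q then 1 else 0) + ∑ a ∈ Finset.univ.filter (M.step p · = q), {[a]} := by
  ext w
  rw [Language.mem_add, Language.mem_sum]
  constructor
  · rintro (_ | ⟨_, a⟩ | ⟨a, hS, -⟩)
    · simp [Language.mem_one]
    · exact .inr ⟨a, by simp, rfl⟩
    · exact hS.elim
  · rintro (h | ⟨a, ha, rfl⟩)
    · split_ifs at h with hpq
      · rw [(Language.mem_one w).mp h, hpq]; exact .nil q
      · exact (Language.notMem_zero w h).elim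
    · exact (Finset.mem_filter.mp ha).2 ▸ .single p a

theorem pathLang_insert_le (S : Set σ) (s p q : σ) :
    M.pathLang (insert s S) p q ≤
      M.pathLang S p q + M.pathLang S p s * ((M.pathLang S s s)∗ * M.pathLang S s q) := by
  intro w hw
  induction hw with
  | nil p => exact .inl (.nil p)
  | single p a => exact .inl (.single p a)
  | @cons p q a w hmem _ ih =>
    rcases hmem with hs | hS
    · -- the rest of the run starts at `s`, so it lies in `(pathLang S s s)∗ * pathLang S s q`
      rw [hs] at ih
      exact .inr ⟨[a], hs ▸ .single p a, w, add_mul_kstar_mul (M.pathLang S s s) _ ▸ ih, rfl⟩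
    · rcases ih with hw | ⟨u, hu, v, hv, rfl⟩
      · exact .inl (.cons a hS hw)
      · exact .inr ⟨a :: u, .cons a hS hu, v, hv, rfl⟩

theorem pathLang_insert (S : Set σ) (s p q : σ) :
    M.pathLang (insert s S) p q =
      M.pathLang S p q + M.pathLang S p s * ((M.pathLang S s s)∗ * M.pathLang S s q) := by
  refine le_antisymm (pathLang_insert_le M S s p q)
    (add_le (pathLang_mono M (Set.subset_insert s S) p q) ?_)
  calc M.pathLang S p s * ((M.pathLang S s s)∗ * M.pathLang S s q)
        ≤ M.pathLang (insert s S) p s *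
            (M.pathLang (insert s S) s s * M.pathLang (insert s S) s q) := by
          have hS := Set.subset_insert s S
          exact mul_le_mul' (pathLang_mono M hS p s)
            (mul_le_mul' (kstar_pathLang_le M S s) (pathLang_mono M hS s q))
      _ ≤ M.pathLang (insert s S) p q := by
          grw [pathLang_mul_le M (Set.mem_insert s S), pathLang_mul_le M (Set.mem_insert s S)]

theorem accepts_eq_sum_pathLang [Fintype σ] [DecidablePred (· ∈ M.accept)] :
    M.accepts = ∑ q ∈ Finset.univ.filter (· ∈ M.accept), M.pathLang Set.univ M.start q := by
  ext w
  rw [Language.mem_sum]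
  simp only [mem_accepts, eval, Finset.mem_filter, Finset.mem_univ, true_and]
  exact ⟨fun h => ⟨_, h, pathVia_univ_iff.mpr rfl⟩, fun ⟨q, hq, h⟩ => pathVia_univ_iff.mp h ▸ hq⟩

theorem hasRegex_pathLang [Fintype α] (S : Finset σ) (p q : σ) :
    (M.pathLang S p q).HasRegex := by
  classical
  induction S using Finset.induction_on generalizing p q with
  | empty =>
    rw [Finset.coe_empty, pathLang_empty]
    refine .add ?_ (.sum _ fun a _ => .singleton a)
    split_ifs
    exacts [.one, .zero]
  | insert s S _ ih =>
    rw [Finset.coe_insert, pathLang_insert]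
    exact (ih p q).add ((ih p s).mul ((ih s s).kstar.mul (ih s q)))

end DFA

/-- Every DFA over a finite alphabet with finitely many states is
equivalent to some regular expression (Brzozowski's algebraic method). -/
theorem dfa_to_regularExpression {A σ : Type} [Fintype A] [Fintype σ]
    (M : DFA A σ) :
    ∃ r : RegularExpression A, r.matches' = M.accepts := by
  classical
  rw [M.accepts_eq_sum_pathLang, ← Finset.coe_univ]
  exact Language.HasRegex.sum _ fun q _ => M.hasRegex_pathLang Finset.univ M.start q
end
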